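/- arXiv:1306.6653 — 5 statements merged into one kernel-verified Lean document; each statement's English description precedes it below -/
import Mathlib

section
/- Let (X,S) be a measurable space, K a complex Hilbert space, and E : S → B(K) a positive-operator-valued measure. Let {f_n} be an increasing sequence of E-integrable functions f_n : X → [0,∞) converging pointwise to a measurable function f : X → [0,∞), and for each n let T_n ∈ B(K) be the positive operator with ⟪T_n k, k⟫ = ∫_X f_n dE_k for all k ∈ K. If there exists an operator B ∈ B(K) with T_n ⪯ B for all n, then f is E-integrable, there exists a positive operator T ∈ B(K) with ⟪Tk, k⟫ = ∫_X f dE_k for all k ∈ K, and T_n converges to T in the strong operator topology, i.e. ‖T_n k − Tk‖ → 0 for every k ∈ K. -/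
/-!
Since `⟪Tₙ k, k⟫ = ∫ fₙ dE_k` increases with `n`, so does `Tₙ`. For `n ≤ m` the operator
`Tₘ - Tₙ` is then positive and dominated by `B - T₀`, and factoring it through its square root
gives `‖Tₘ k - Tₙ k‖² ≤ ‖B - T₀‖ ⟪(Tₘ - Tₙ) k, k⟫`. As `⟪Tₙ k, k⟫` converges, `(Tₙ k)` is
Cauchy (Vigier's theorem). Banach–Steinhaus makes the pointwise limit a bounded operator `S`,
positive as a strong limit of positive operators, and the monotone convergence theorem
identifies `⟪S k, k⟫` with `∫ g dE_k`.
-/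

open MeasureTheory Filter Topology ZeroAtInfty ENNReal

noncomputable section

instance {H : Type*} [NormedAddCommGroup H] [InnerProductSpace ℂ H] [CompleteSpace H] :
    SMulMemClass (VonNeumannAlgebra H) ℂ (H →L[ℂ] H) where
  smul_mem {s} c a ha := s.toStarSubalgebra.smul_mem ha c

instance {H : Type*} [NormedAddCommGroup H] [InnerProductSpace ℂ H] [CompleteSpace H]
    (W : VonNeumannAlgebra H) : ContinuousStar ↥W :=
  ⟨continuous_induced_rng.2 (continuous_star.comp continuous_subtype_val)⟩

/-- A set function on a measurable space with values in `B(K)` is countably additive in the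
strong operator topology: for every `k` and every sequence of pairwise disjoint measurable
sets, the series of values applied to `k` sums to the value of the union applied to `k`. -/
def CountablyAdditiveSOT {X : Type*} [MeasurableSpace X] {K : Type*} [NormedAddCommGroup K]
    [InnerProductSpace ℂ K] (F : Set X → (K →L[ℂ] K)) : Prop :=
  ∀ Δ : ℕ → Set X, (∀ j, MeasurableSet (Δ j)) → Pairwise (Function.onFun Disjoint Δ) →
    ∀ k : K, HasSum (fun j => F (Δ j) k) (F (⋃ j, Δ j) k)

/-- A positive-operator-valued measure: positive values, countably additive in the SOT. -/
def IsPOVM {X : Type*} [MeasurableSpace X] {K : Type*} [NormedAddCommGroup K]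
    [InnerProductSpace ℂ K] [CompleteSpace K] (F : Set X → (K →L[ℂ] K)) : Prop :=
  (∀ Δ : Set X, MeasurableSet Δ → (F Δ).IsPositive) ∧ CountablyAdditiveSOT F

/-- A spectral measure: all values are hermitian projections and the set function is countably
additive in the strong operator topology. -/
def IsSpectralMeasure {X : Type*} [MeasurableSpace X] {K : Type*} [NormedAddCommGroup K]
    [InnerProductSpace ℂ K] [CompleteSpace K] (F : Set X → (K →L[ℂ] K)) : Prop :=
  (∀ Δ : Set X, MeasurableSet Δ → IsSelfAdjoint (F Δ) ∧ IsIdempotentElem (F Δ)) ∧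
    CountablyAdditiveSOT F

/-- A hermitian projection in a von Neumann algebra: a self-adjoint idempotent. -/
def IsHermProj {H : Type*} [NormedAddCommGroup H] [InnerProductSpace ℂ H] [CompleteSpace H]
    {W : VonNeumannAlgebra H} (P : ↥W) : Prop :=
  IsSelfAdjoint (P : H →L[ℂ] H) ∧ IsIdempotentElem (P : H →L[ℂ] H)

/-- A non-negative measure `m : S → B(W₁, W₂)`: for every positive `A ∈ W₁` the set function
`Δ ↦ m(Δ)(A)` is a positive-operator-valued measure. -/
def IsNonnegMeasure {X : Type*} [MeasurableSpace X] {H K : Type*}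
    [NormedAddCommGroup H] [InnerProductSpace ℂ H] [CompleteSpace H]
    [NormedAddCommGroup K] [InnerProductSpace ℂ K] [CompleteSpace K]
    {W₁ : VonNeumannAlgebra H} {W₂ : VonNeumannAlgebra K}
    (m : Set X → (↥W₁ →L[ℂ] ↥W₂)) : Prop :=
  ∀ A : ↥W₁, (A : H →L[ℂ] H).IsPositive → IsPOVM (fun Δ => ((m Δ A : K →L[ℂ] K)))

/-- A non-negative spectral measure: a non-negative measure such that `Δ ↦ M(Δ)(P)` is a
spectral measure for every hermitian projection `P ∈ W₁`, and
`M(Δ₁)(P) · M(Δ₂)(Q) = M(Δ₁ ∩ Δ₂)(PQ)` for all hermitian projections `P, Q`. -/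
def IsNonnegSpectralMeasure {X : Type*} [MeasurableSpace X] {H K : Type*}
    [NormedAddCommGroup H] [InnerProductSpace ℂ H] [CompleteSpace H]
    [NormedAddCommGroup K] [InnerProductSpace ℂ K] [CompleteSpace K]
    {W₁ : VonNeumannAlgebra H} {W₂ : VonNeumannAlgebra K}
    (M : Set X → (↥W₁ →L[ℂ] ↥W₂)) : Prop :=
  IsNonnegMeasure M ∧
  (∀ P : ↥W₁, IsHermProj P → IsSpectralMeasure (fun Δ => ((M Δ P : K →L[ℂ] K)))) ∧
  (∀ P Q : ↥W₁, IsHermProj P → IsHermProj Q → ∀ Δ₁ Δ₂ : Set X, MeasurableSet Δ₁ →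
    MeasurableSet Δ₂ → M Δ₁ P * M Δ₂ Q = M (Δ₁ ∩ Δ₂) (P * Q))

/-- `μ` is the (finite, nonnegative) scalar measure `Δ ↦ ⟪F(Δ)k, k⟫` associated to the
operator-valued set function `F` and the vector `k`. -/
def IsScalarMeasureOf {X : Type*} [MeasurableSpace X] {K : Type*} [NormedAddCommGroup K]
    [InnerProductSpace ℂ K] (μ : Measure X) (F : Set X → (K →L[ℂ] K)) (k : K) : Prop :=
  ∀ Δ : Set X, MeasurableSet Δ → μ Δ = ENNReal.ofReal (inner ℂ (F Δ k) k : ℂ).re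
open scoped ComplexOrder InnerProductSpace

theorem tendsto_lintegral_ofReal_of_monotone {X : Type*} [MeasurableSpace X] {μ : Measure X}
    {f : ℕ → X → ℝ} {g : X → ℝ} (hf : ∀ n, Measurable (f n)) (hmono : ∀ x, Monotone (f · x))
    (hlim : ∀ x, Tendsto (f · x) atTop (𝓝 (g x))) :
    Tendsto (fun n => ∫⁻ x, ENNReal.ofReal (f n x) ∂μ) atTop
      (𝓝 (∫⁻ x, ENNReal.ofReal (g x) ∂μ)) :=
  lintegral_tendsto_of_tendsto_of_monotone (fun n => (hf n).ennreal_ofReal.aemeasurable)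
    (.of_forall fun x _ _ h => ENNReal.ofReal_le_ofReal (hmono x h))
    (.of_forall fun x => (ENNReal.continuous_ofReal.tendsto _).comp (hlim x))

namespace ContinuousLinearMap

variable {K : Type*} [NormedAddCommGroup K] [InnerProductSpace ℂ K]

theorem isPositive_iff_inner_nonneg (A : K →L[ℂ] K) : A.IsPositive ↔ ∀ x, 0 ≤ ⟪A x, x⟫_ℂ := by
  refine ⟨fun hA => hA.inner_nonneg_left, fun h => A.isPositive_iff_complex.2 fun x => ?_⟩
  obtain ⟨hre, him⟩ := Complex.nonneg_iff.1 (h x)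
  exact ⟨Complex.ext (by simp) (by simpa using him), hre⟩

theorem le_iff_inner_le {A B : K →L[ℂ] K} : A ≤ B ↔ ∀ x, ⟪A x, x⟫_ℂ ≤ ⟪B x, x⟫_ℂ := by
  simp only [le_def, isPositive_iff_inner_nonneg, sub_apply, inner_sub_left, sub_nonneg]

theorem isPositive_of_tendsto_apply {ι : Type*} {l : Filter ι} [l.NeBot] {T : ι → K →L[ℂ] K}
    {S : K →L[ℂ] K} (hT : ∀ i, (T i).IsPositive)
    (hS : ∀ x, Tendsto (fun i => T i x) l (𝓝 (S x))) : S.IsPositive :=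
  (isPositive_iff_inner_nonneg S).2 fun x =>
    ge_of_tendsto ((hS x).inner tendsto_const_nhds) (.of_forall fun i => (hT i).inner_nonneg_left x)

variable [CompleteSpace K]

theorem IsPositive.norm_apply_sq_le {A : K →L[ℂ] K} (hA : A.IsPositive) (x : K) :
    ‖A x‖ ^ 2 ≤ ‖A‖ * RCLike.re ⟪A x, x⟫_ℂ := by
  have hA0 : 0 ≤ A := (nonneg_iff_isPositive A).2 hA
  set R := CFC.sqrt A
  have hRR : R * R = A := CFC.sqrt_mul_sqrt_self A
  have hR : adjoint R ∘L R = A := by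
    rw [← star_eq_adjoint, (IsSelfAdjoint.of_nonneg (CFC.sqrt_nonneg A)).star_eq]
    exact hRR
  calc ‖A x‖ ^ 2 = ‖R (R x)‖ ^ 2 := by rw [← hRR]; rfl
    _ ≤ (‖R‖ * ‖R x‖) ^ 2 := by gcongr; exact R.le_opNorm _
    _ = ‖R‖ ^ 2 * ‖R x‖ ^ 2 := mul_pow _ _ _
    _ = ‖A‖ * RCLike.re ⟪A x, x⟫_ℂ := by
      rw [CFC.norm_sqrt A, Real.sq_sqrt (norm_nonneg A), apply_norm_sq_eq_inner_adjoint_left, hR]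

theorem cauchySeq_apply_of_monotone_of_le {T : ℕ → K →L[ℂ] K} (hT : Monotone T) {B : K →L[ℂ] K}
    (hB : ∀ n, T n ≤ B) (x : K) : CauchySeq fun n => T n x := by
  set a : ℕ → ℝ := fun n => RCLike.re ⟪T n x, x⟫_ℂ
  set C := ‖B - T 0‖
  have ha : Monotone a := fun n m h => by
    simpa [a, inner_sub_left] using (le_def _ _).1 (hT h) |>.re_inner_nonneg_left x
  have ha_bdd : BddAbove (Set.range a) := ⟨RCLike.re ⟪B x, x⟫_ℂ, by
    rintro _ ⟨n, rfl⟩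
    simpa [a, inner_sub_left] using (le_def _ _).1 (hB n) |>.re_inner_nonneg_left x⟩
  have hstep : ∀ n m, n ≤ m → ‖T m x - T n x‖ ^ 2 ≤ C * (a m - a n) := fun n m h => by
    have hD : 0 ≤ T m - T n := sub_nonneg.2 (hT h)
    have hDC : ‖T m - T n‖ ≤ C :=
      CStarAlgebra.norm_le_norm_of_nonneg_of_le hD (sub_le_sub (hB m) (hT (Nat.zero_le n)))
    calc ‖T m x - T n x‖ ^ 2 = ‖(T m - T n) x‖ ^ 2 := rfl
      _ ≤ ‖T m - T n‖ * RCLike.re ⟪(T m - T n) x, x⟫_ℂ :=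
        ((nonneg_iff_isPositive _).1 hD).norm_apply_sq_le x
      _ ≤ C * (a m - a n) := by
        simp only [sub_apply, inner_sub_left, map_sub, a]
        exact mul_le_mul_of_nonneg_right hDC (sub_nonneg.2 (ha h))
  refine cauchySeq_of_le_tendsto_0' (fun n => √(C * ((⨆ m, a m) - a n))) (fun n m h => ?_) ?_
  · rw [dist_comm, dist_eq_norm]
    refine Real.le_sqrt_of_sq_le ((hstep n m h).trans ?_)
    gcongr
    exact le_ciSup ha_bdd m
  · have hlim := (tendsto_atTop_ciSup ha ha_bdd).const_sub (⨆ m, a m)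
    simpa using (hlim.const_mul C).sqrt

theorem exists_tendsto_apply_of_monotone_of_le {T : ℕ → K →L[ℂ] K} (hT : Monotone T)
    {B : K →L[ℂ] K} (hB : ∀ n, T n ≤ B) :
    ∃ S : K →L[ℂ] K, ∀ x, Tendsto (fun n => T n x) atTop (𝓝 (S x)) := by
  choose S hS using fun x =>
    cauchySeq_tendsto_of_complete (cauchySeq_apply_of_monotone_of_le hT hB x)
  exact ⟨continuousLinearMapOfTendsto T (tendsto_pi_nhds.2 hS), hS⟩

end ContinuousLinearMap

open ContinuousLinearMap

theorem statement7_general {X : Type} [MeasurableSpace X] {K : Type}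
    [NormedAddCommGroup K] [InnerProductSpace ℂ K] [CompleteSpace K]
    (μ : K → Measure X)
    (f : ℕ → X → ℝ) (g : X → ℝ)
    (hfmeas : ∀ n, Measurable (f n))
    (hmono : ∀ n x, f n x ≤ f (n + 1) x)
    (hlim : ∀ x, Filter.Tendsto (fun n => f n x) Filter.atTop (nhds (g x)))
    (hfint : ∀ n, ∃ c : ℝ, ∀ k : K,
      (∫⁻ x, ENNReal.ofReal (f n x) ∂(μ k)) ≤ ENNReal.ofReal (c * ‖k‖ ^ 2))
    (T : ℕ → (K →L[ℂ] K))
    (hTpos : ∀ n, (T n).IsPositive)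
    (hT : ∀ n, ∀ k : K,
      (inner ℂ (T n k) k : ℂ) = (((∫⁻ x, ENNReal.ofReal (f n x) ∂(μ k)).toReal : ℝ) : ℂ))
    (B : K →L[ℂ] K) (hB : ∀ n, (B - T n).IsPositive) :
    (∃ c : ℝ, ∀ k : K,
      (∫⁻ x, ENNReal.ofReal (g x) ∂(μ k)) ≤ ENNReal.ofReal (c * ‖k‖ ^ 2)) ∧
    ∃ S : K →L[ℂ] K, S.IsPositive ∧
      (∀ k : K,
        (inner ℂ (S k) k : ℂ) = (((∫⁻ x, ENNReal.ofReal (g x) ∂(μ k)).toReal : ℝ) : ℂ)) ∧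
      (∀ k : K, Filter.Tendsto (fun n => ‖T n k - S k‖) Filter.atTop (nhds 0)) := by
  have hfin : ∀ n k, ∫⁻ x, ENNReal.ofReal (f n x) ∂(μ k) ≠ ⊤ := fun n k =>
    have ⟨c, hc⟩ := hfint n
    ((hc k).trans_lt ENNReal.ofReal_lt_top).ne
  have hTf : ∀ n k,
      ∫⁻ x, ENNReal.ofReal (f n x) ∂(μ k) = ENNReal.ofReal (RCLike.re ⟪T n k, k⟫_ℂ) := by
    intro n k
    rw [hT, RCLike.re_to_complex, Complex.ofReal_re, ENNReal.ofReal_toReal (hfin n k)]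
  have hTmono : Monotone T := monotone_nat_of_le_succ fun n => le_iff_inner_le.2 fun k => by
    rw [hT, hT, Complex.real_le_real]
    exact ENNReal.toReal_mono (hfin _ k)
      (lintegral_mono fun x => ENNReal.ofReal_le_ofReal (hmono n x))
  obtain ⟨S, hS⟩ := exists_tendsto_apply_of_monotone_of_le hTmono fun n => (le_def _ _).2 (hB n)
  have hSpos : S.IsPositive := isPositive_of_tendsto_apply hTpos hS
  have hgS : ∀ k,
      ∫⁻ x, ENNReal.ofReal (g x) ∂(μ k) = ENNReal.ofReal (RCLike.re ⟪S k, k⟫_ℂ) := by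
    intro k
    refine tendsto_nhds_unique (tendsto_lintegral_ofReal_of_monotone hfmeas
      (fun x => monotone_nat_of_le_succ (hmono · x)) hlim) ?_
    simp only [hTf]
    exact (ENNReal.continuous_ofReal.tendsto _).comp
      (RCLike.continuous_re.tendsto _ |>.comp ((hS k).inner tendsto_const_nhds))
  refine ⟨⟨‖S‖, fun k => ?_⟩, S, hSpos, fun k => ?_,
    fun k => tendsto_iff_norm_sub_tendsto_zero.1 (hS k)⟩
  · rw [hgS, sq, ← mul_assoc]
    exact ENNReal.ofReal_le_ofReal ((re_inner_le_norm _ _).trans (by gcongr; exact S.le_opNorm k))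
  · rw [hgS, ENNReal.toReal_ofReal (hSpos.re_inner_nonneg_left k)]
    exact (S.isPositive_iff_complex.1 hSpos k).1.symm

/-- **monotone convergence for POVM integrals.** If `fₙ` is an increasing
sequence of nonnegative `E`-integrable functions converging pointwise to `f`, `Tₙ` are the
associated positive operators (`⟪Tₙk, k⟫ = ∫ fₙ dE_k`) and `Tₙ ⪯ B` for all `n`, then `f` is
`E`-integrable, there is a positive operator `T` with `⟪Tk, k⟫ = ∫ f dE_k`, and `Tₙ → T` in
the strong operator topology. -/
theorem statement7 {X : Type} [MeasurableSpace X] {K : Type}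
    [NormedAddCommGroup K] [InnerProductSpace ℂ K] [CompleteSpace K]
    (E : Set X → (K →L[ℂ] K)) (hE : IsPOVM E)
    (μ : K → Measure X) (hμ : ∀ k : K, IsScalarMeasureOf (μ k) E k)
    (f : ℕ → X → ℝ) (g : X → ℝ)
    (hf0 : ∀ n x, 0 ≤ f n x)
    (hfmeas : ∀ n, Measurable (f n)) (hgmeas : Measurable g)
    (hmono : ∀ n x, f n x ≤ f (n + 1) x)
    (hlim : ∀ x, Filter.Tendsto (fun n => f n x) Filter.atTop (nhds (g x)))
    (hfint : ∀ n, ∃ c : ℝ, ∀ k : K,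
      (∫⁻ x, ENNReal.ofReal (f n x) ∂(μ k)) ≤ ENNReal.ofReal (c * ‖k‖ ^ 2))
    (T : ℕ → (K →L[ℂ] K))
    (hTpos : ∀ n, (T n).IsPositive)
    (hT : ∀ n, ∀ k : K,
      (inner ℂ (T n k) k : ℂ) = (((∫⁻ x, ENNReal.ofReal (f n x) ∂(μ k)).toReal : ℝ) : ℂ))
    (B : K →L[ℂ] K) (hB : ∀ n, (B - T n).IsPositive) :
    (∃ c : ℝ, ∀ k : K,
      (∫⁻ x, ENNReal.ofReal (g x) ∂(μ k)) ≤ ENNReal.ofReal (c * ‖k‖ ^ 2)) ∧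
    ∃ S : K →L[ℂ] K, S.IsPositive ∧
      (∀ k : K,
        (inner ℂ (S k) k : ℂ) = (((∫⁻ x, ENNReal.ofReal (g x) ∂(μ k)).toReal : ℝ) : ℂ)) ∧
      (∀ k : K, Filter.Tendsto (fun n => ‖T n k - S k‖) Filter.atTop (nhds 0)) :=
  statement7_general μ f g hfmeas hmono hlim hfint T hTpos hT B hB
end
end

section
/- Let (X,S) be a measurable space, H and K complex Hilbert spaces, W₁ ⊆ B(H) and W₂ ⊆ B(K) von Neumann algebras, and m : S → B(W₁,W₂) a non-negative measure. Let f₁,…,f_n, g₁,…,g_m : X → [0,∞) be measurable functions and B₁,…,B_n, C₁,…,C_m ∈ W₁ positive operators such that each fᵢ is integrable with respect to m_{Bᵢ} (i.e. there is a constant Kᵢ with ∫_X fᵢ dμ_{Bᵢ,k} ≤ Kᵢ‖k‖² for all k ∈ K) and each gⱼ is integrable with respect to m_{Cⱼ}. If Σᵢ₌₁ⁿ fᵢ(x)Bᵢ − Σⱼ₌₁ᵐ gⱼ(x)Cⱼ is a positive operator for every x ∈ X, then for every k ∈ K, Σᵢ₌₁ⁿ ∫_X fᵢ dμ_{Bᵢ,k}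 ≥ Σⱼ₌₁ᵐ ∫_X gⱼ dμ_{Cⱼ,k}. -/
open MeasureTheory Filter Topology ZeroAtInfty ENNReal

noncomputable section

open scoped NNReal

/-! Cut `X` into the countably many measurable pieces on which every `⌊fᵢ / δ⌋` and `⌊gⱼ / δ⌋`
is constant. On a piece `Δ` with a chosen point `x₀`, positivity of `m(Δ)` applied to
`Σ fᵢ(x₀) Bᵢ - Σ gⱼ(x₀) Cⱼ` gives `Σ gⱼ(x₀) μ_{Cⱼ,k}(Δ) ≤ Σ fᵢ(x₀) μ_{Bᵢ,k}(Δ)`, and replacing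
the values at `x₀` by the functions costs at most `δ` times the mass of `Δ`. Summing over the
pieces and letting `δ → 0` compares the lower integrals; integrability of the `fᵢ` keeps them
finite, so the comparison survives `toReal`. -/

theorem NNReal.le_add_of_floor_div_eq {a b δ : ℝ≥0} (hδ : 0 < δ)
    (h : ⌊a / δ⌋₊ = ⌊b / δ⌋₊) : a ≤ b + δ := by
  have key : a / δ < b / δ + 1 := calc
    a / δ < ⌊a / δ⌋₊ + 1 := Nat.lt_floor_add_one _
    _ = ⌊b / δ⌋₊ + 1 := by rw [h]
    _ ≤ b / δ + 1 := by gcongr; exact Nat.floor_le zero_le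
  rw [div_lt_iff₀ hδ, add_mul, div_mul_cancel₀ _ hδ.ne', one_mul] at key
  exact key.le

theorem ENNReal.le_of_forall_pos_le_add_mul {a b c : ℝ≥0∞} (hc : c ≠ ∞)
    (h : ∀ δ : ℝ≥0, 0 < δ → a ≤ b + δ * c) : a ≤ b := by
  have hlim : Tendsto (fun δ : ℝ≥0 => b + (δ : ℝ≥0∞) * c) (𝓝[>] 0) (𝓝 b) := by
    have : Tendsto (fun δ : ℝ≥0 => (δ : ℝ≥0∞)) (𝓝[>] 0) (𝓝 0) :=
      (ENNReal.continuous_coe.tendsto' 0 0 ENNReal.coe_zero).mono_left nhdsWithin_le_nhds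
    simpa using tendsto_const_nhds.add (ENNReal.Tendsto.mul_const this (Or.inr hc))
  exact ge_of_tendsto hlim (eventually_nhdsWithin_of_forall h)

theorem ENNReal.sum_toReal_le_sum_toReal {ι κ : Type*} [Fintype ι] [Fintype κ]
    {a : ι → ℝ≥0∞} {b : κ → ℝ≥0∞} (ha : ∀ i, a i ≠ ∞) (h : ∑ j, b j ≤ ∑ i, a i) :
    ∑ j, (b j).toReal ≤ ∑ i, (a i).toReal := by
  have hsa : ∑ i, a i ≠ ∞ := ENNReal.sum_ne_top.2 fun i _ => ha i
  have hb : ∀ j, b j ≠ ∞ := fun j =>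
    ENNReal.sum_ne_top.1 (ne_top_of_le_ne_top hsa h) j (Finset.mem_univ j)
  rw [← ENNReal.toReal_sum fun j _ => hb j, ← ENNReal.toReal_sum fun i _ => ha i]
  exact ENNReal.toReal_mono hsa h

section
variable {X : Type*} [MeasurableSpace X] {μ : Measure X} {s : Set X} {F : X → ℝ≥0∞} {c δ : ℝ≥0∞}

theorem setLIntegral_le_add_mul (h : ∀ x ∈ s, F x ≤ c + δ) :
    ∫⁻ x in s, F x ∂μ ≤ c * μ s + δ * μ s := by
  calc ∫⁻ x in s, F x ∂μ ≤ ∫⁻ _ in s, (c + δ) ∂μ := setLIntegral_mono measurable_const h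
    _ = c * μ s + δ * μ s := by rw [setLIntegral_const, add_mul]

theorem mul_le_setLIntegral_add (hs : MeasurableSet s) (h : ∀ x ∈ s, c ≤ F x + δ) :
    c * μ s ≤ ∫⁻ x in s, F x ∂μ + δ * μ s := by
  calc c * μ s = ∫⁻ _ in s, c ∂μ := (setLIntegral_const _ _).symm
    _ ≤ ∫⁻ x in s, (F x + δ) ∂μ := setLIntegral_mono' hs h
    _ = ∫⁻ x in s, F x ∂μ + δ * μ s := by
      rw [lintegral_add_right _ measurable_const, setLIntegral_const]

end

section
variable {X ι κ : Type*} [MeasurableSpace X] [Fintype ι] [Fintype κ]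
  {μ : ι → Measure X} {ν : κ → Measure X} {f : ι → X → ℝ≥0} {g : κ → X → ℝ≥0}

theorem sum_setLIntegral_le_of_smul_le {x₀ : X}
    (h : ∑ j, (g j x₀ : ℝ≥0∞) • ν j ≤ ∑ i, (f i x₀ : ℝ≥0∞) • μ i)
    {s : Set X} (hs : MeasurableSet s) {δ : ℝ≥0∞}
    (hf : ∀ i, ∀ x ∈ s, (f i x₀ : ℝ≥0∞) ≤ f i x + δ)
    (hg : ∀ j, ∀ x ∈ s, (g j x : ℝ≥0∞) ≤ g j x₀ + δ) :
    ∑ j, ∫⁻ x in s, (g j x : ℝ≥0∞) ∂ν j ≤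
      ∑ i, ∫⁻ x in s, (f i x : ℝ≥0∞) ∂μ i + δ * (∑ i, μ i s + ∑ j, ν j s) := by
  have hmass : ∑ j, (g j x₀ : ℝ≥0∞) * ν j s ≤ ∑ i, (f i x₀ : ℝ≥0∞) * μ i s := by
    simpa [Measure.coe_finsetSum] using (Measure.le_iff.1 h) s hs
  calc ∑ j, ∫⁻ x in s, (g j x : ℝ≥0∞) ∂ν j
      ≤ ∑ j, ((g j x₀ : ℝ≥0∞) * ν j s + δ * ν j s) :=
        Finset.sum_le_sum fun j _ => setLIntegral_le_add_mul (hg j)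
    _ = ∑ j, (g j x₀ : ℝ≥0∞) * ν j s + δ * ∑ j, ν j s := by
        rw [Finset.sum_add_distrib, Finset.mul_sum]
    _ ≤ ∑ i, (f i x₀ : ℝ≥0∞) * μ i s + δ * ∑ j, ν j s := by gcongr
    _ ≤ ∑ i, (∫⁻ x in s, (f i x : ℝ≥0∞) ∂μ i + δ * μ i s) + δ * ∑ j, ν j s := by
        gcongr with i; exact mul_le_setLIntegral_add hs (hf i)
    _ = ∑ i, ∫⁻ x in s, (f i x : ℝ≥0∞) ∂μ i + δ * (∑ i, μ i s + ∑ j, ν j s) := by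
        rw [Finset.sum_add_distrib, ← Finset.mul_sum, mul_add, add_assoc]

theorem sum_lintegral_eq_tsum_sum_setLIntegral {T : Type*} [Countable T] [MeasurableSpace T]
    [MeasurableSingletonClass T] {φ : X → T}
    (hφ : Measurable φ) (F : κ → X → ℝ≥0∞) :
    ∑ j, ∫⁻ x, F j x ∂ν j = ∑' t, ∑ j, ∫⁻ x in φ ⁻¹' {t}, F j x ∂ν j := by
  have hU : ⋃ t, φ ⁻¹' {t} = Set.univ := Set.iUnion_eq_univ_iff.2 fun x => ⟨φ x, rfl⟩
  rw [Summable.tsum_finsetSum fun j _ => ENNReal.summable]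
  refine Finset.sum_congr rfl fun j _ => ?_
  rw [← lintegral_iUnion (fun t => hφ (measurableSet_singleton t)) (pairwise_disjoint_fiber φ),
    hU, setLIntegral_univ]

theorem sum_measure_univ_eq_tsum_sum_measure_preimage {T : Type*} [Countable T]
    [MeasurableSpace T] [MeasurableSingletonClass T] {φ : X → T} (hφ : Measurable φ) :
    ∑ j, ν j Set.univ = ∑' t, ∑ j, ν j (φ ⁻¹' {t}) := by
  simpa only [lintegral_one, Measure.restrict_apply_univ] using
    sum_lintegral_eq_tsum_sum_setLIntegral (ν := ν) hφ fun _ _ => 1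

theorem sum_lintegral_le_add_mul (hf : ∀ i, Measurable (f i)) (hg : ∀ j, Measurable (g j))
    (h : ∀ x, ∑ j, (g j x : ℝ≥0∞) • ν j ≤ ∑ i, (f i x : ℝ≥0∞) • μ i)
    {δ : ℝ≥0} (hδ : 0 < δ) :
    ∑ j, ∫⁻ x, (g j x : ℝ≥0∞) ∂ν j ≤
      ∑ i, ∫⁻ x, (f i x : ℝ≥0∞) ∂μ i + δ * (∑ i, μ i Set.univ + ∑ j, ν j Set.univ) := by
  set φ : X → (ι → ℕ) × (κ → ℕ) := fun x => (fun i => ⌊f i x / δ⌋₊, fun j => ⌊g j x / δ⌋₊)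
  have hφ : Measurable φ := .prodMk (measurable_pi_lambda _ fun i => ((hf i).div_const δ).nat_floor)
      (measurable_pi_lambda _ fun j => ((hg j).div_const δ).nat_floor)
  have hpiece : ∀ t, ∑ j, ∫⁻ x in φ ⁻¹' {t}, (g j x : ℝ≥0∞) ∂ν j ≤
      ∑ i, ∫⁻ x in φ ⁻¹' {t}, (f i x : ℝ≥0∞) ∂μ i +
        δ * (∑ i, μ i (φ ⁻¹' {t}) + ∑ j, ν j (φ ⁻¹' {t})) := by
    intro t
    rcases (φ ⁻¹' {t}).eq_empty_or_nonempty with he | ⟨x₀, hx₀⟩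
    · simp [he]
    have hfib : ∀ x ∈ φ ⁻¹' {t}, φ x = φ x₀ := fun x hx => hx.trans hx₀.symm
    refine sum_setLIntegral_le_of_smul_le (h x₀) (hφ (measurableSet_singleton t))
      (fun i x hx => ?_) (fun j x hx => ?_)
    · exact_mod_cast NNReal.le_add_of_floor_div_eq hδ
        (congrFun (congrArg Prod.fst (hfib x hx)) i).symm
    · exact_mod_cast NNReal.le_add_of_floor_div_eq hδ
        (congrFun (congrArg Prod.snd (hfib x hx)) j)
  calc ∑ j, ∫⁻ x, (g j x : ℝ≥0∞) ∂ν j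
      = ∑' t, ∑ j, ∫⁻ x in φ ⁻¹' {t}, (g j x : ℝ≥0∞) ∂ν j :=
        sum_lintegral_eq_tsum_sum_setLIntegral hφ _
    _ ≤ ∑' t, (∑ i, ∫⁻ x in φ ⁻¹' {t}, (f i x : ℝ≥0∞) ∂μ i +
        δ * (∑ i, μ i (φ ⁻¹' {t}) + ∑ j, ν j (φ ⁻¹' {t}))) := ENNReal.tsum_le_tsum hpiece
    _ = ∑ i, ∫⁻ x, (f i x : ℝ≥0∞) ∂μ i + δ * (∑ i, μ i Set.univ + ∑ j, ν j Set.univ) := by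
        rw [ENNReal.tsum_add, ENNReal.tsum_mul_left, ENNReal.tsum_add,
          ← sum_measure_univ_eq_tsum_sum_measure_preimage hφ,
          ← sum_measure_univ_eq_tsum_sum_measure_preimage hφ,
          ← sum_lintegral_eq_tsum_sum_setLIntegral hφ]

theorem sum_lintegral_le_of_forall_smul_le [∀ i, IsFiniteMeasure (μ i)]
    [∀ j, IsFiniteMeasure (ν j)] (hf : ∀ i, Measurable (f i)) (hg : ∀ j, Measurable (g j))
    (h : ∀ x, ∑ j, (g j x : ℝ≥0∞) • ν j ≤ ∑ i, (f i x : ℝ≥0∞) • μ i) :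
    ∑ j, ∫⁻ x, (g j x : ℝ≥0∞) ∂ν j ≤ ∑ i, ∫⁻ x, (f i x : ℝ≥0∞) ∂μ i :=
  ENNReal.le_of_forall_pos_le_add_mul (ENNReal.add_ne_top.2
    ⟨ENNReal.sum_ne_top.2 fun _ _ => measure_ne_top _ _,
      ENNReal.sum_ne_top.2 fun _ _ => measure_ne_top _ _⟩) fun _ hδ =>
    sum_lintegral_le_add_mul hf hg h hδ

end

theorem IsScalarMeasureOf.isFiniteMeasure {X K : Type*} [MeasurableSpace X]
    [NormedAddCommGroup K] [InnerProductSpace ℂ K] {μ : Measure X} {F : Set X → (K →L[ℂ] K)}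
    {k : K} (h : IsScalarMeasureOf μ F k) : IsFiniteMeasure μ :=
  ⟨by rw [h _ MeasurableSet.univ]; exact ENNReal.ofReal_lt_top⟩

namespace IsNonnegMeasure

variable {X H K : Type*} [MeasurableSpace X]
  [NormedAddCommGroup H] [InnerProductSpace ℂ H] [CompleteSpace H]
  [NormedAddCommGroup K] [InnerProductSpace ℂ K] [CompleteSpace K]
  {W₁ : VonNeumannAlgebra H} {W₂ : VonNeumannAlgebra K} {m : Set X → (↥W₁ →L[ℂ] ↥W₂)}

theorem re_inner_nonneg (hm : IsNonnegMeasure m) {A : ↥W₁} (hA : (A : H →L[ℂ] H).IsPositive)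
    {Δ : Set X} (hΔ : MeasurableSet Δ) (k : K) :
    0 ≤ (inner ℂ ((m Δ A : K →L[ℂ] K) k) k).re :=
  (Complex.nonneg_iff.mp (((hm A hA).1 Δ hΔ).inner_nonneg_left k)).1

variable {μ : ↥W₁ → K → Measure X}

theorem sum_ofReal_mul_apply {ι : Type*} [Fintype ι] (hm : IsNonnegMeasure m)
    (hμ : ∀ A : ↥W₁, (A : H →L[ℂ] H).IsPositive → ∀ k : K,
      IsScalarMeasureOf (μ A k) (fun Δ => ((m Δ A : K →L[ℂ] K))) k)
    {c : ι → ℝ} {D : ι → ↥W₁} (hc : ∀ i, 0 ≤ c i) (hD : ∀ i, (D i : H →L[ℂ] H).IsPositive)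
    (k : K) {Δ : Set X} (hΔ : MeasurableSet Δ) :
    ∑ i, ENNReal.ofReal (c i) * μ (D i) k Δ =
      ENNReal.ofReal (∑ i, c i * (inner ℂ ((m Δ (D i) : K →L[ℂ] K) k) k).re) := by
  rw [ENNReal.ofReal_sum_of_nonneg fun i _ => mul_nonneg (hc i) (hm.re_inner_nonneg (hD i) hΔ k)]
  refine Finset.sum_congr rfl fun i _ => ?_
  rw [hμ _ (hD i) k Δ hΔ, ENNReal.ofReal_mul (hc i)]

theorem sum_smul_le_sum_smul {ι κ : Type*} [Fintype ι] [Fintype κ] (hm : IsNonnegMeasure m)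
    (hμ : ∀ A : ↥W₁, (A : H →L[ℂ] H).IsPositive → ∀ k : K,
      IsScalarMeasureOf (μ A k) (fun Δ => ((m Δ A : K →L[ℂ] K))) k)
    {a : ι → ℝ} {b : κ → ℝ} {B : ι → ↥W₁} {C : κ → ↥W₁} (ha : ∀ i, 0 ≤ a i) (hb : ∀ j, 0 ≤ b j)
    (hB : ∀ i, (B i : H →L[ℂ] H).IsPositive) (hC : ∀ j, (C j : H →L[ℂ] H).IsPositive)
    (hpos : (∑ i, a i • (B i : H →L[ℂ] H) - ∑ j, b j • (C j : H →L[ℂ] H)).IsPositive) (k : K) :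
    ∑ j, ENNReal.ofReal (b j) • μ (C j) k ≤ ∑ i, ENNReal.ofReal (a i) • μ (B i) k := by
  set A : ↥W₁ := ∑ i, (a i : ℂ) • B i - ∑ j, (b j : ℂ) • C j
  have hA : (A : H →L[ℂ] H) = ∑ i, a i • (B i : H →L[ℂ] H) - ∑ j, b j • (C j : H →L[ℂ] H) := by
    simp [A, Complex.coe_smul]
  refine Measure.le_iff.2 fun Δ hΔ => ?_
  set q : ↥W₁ → ℝ := fun A => (inner ℂ ((m Δ A : K →L[ℂ] K) k) k).re
  have hqA : q A = ∑ i, a i * q (B i) - ∑ j, b j * q (C j) := by simp [q, A]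
  have hqA_nonneg : 0 ≤ q A := hm.re_inner_nonneg (hA ▸ hpos) hΔ k
  simp only [Measure.coe_finsetSum, Finset.sum_apply, Measure.smul_apply, smul_eq_mul]
  rw [hm.sum_ofReal_mul_apply hμ hb hC k hΔ, hm.sum_ofReal_mul_apply hμ ha hB k hΔ]
  exact ENNReal.ofReal_le_ofReal (by linarith)

end IsNonnegMeasure

theorem statement10_general {X : Type} [MeasurableSpace X] {H K : Type}
    [NormedAddCommGroup H] [InnerProductSpace ℂ H] [CompleteSpace H]
    [NormedAddCommGroup K] [InnerProductSpace ℂ K] [CompleteSpace K]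
    {W₁ : VonNeumannAlgebra H} {W₂ : VonNeumannAlgebra K}
    (m : Set X → (↥W₁ →L[ℂ] ↥W₂)) (hm : IsNonnegMeasure m)
    (μ : ↥W₁ → K → Measure X)
    (hμ : ∀ A : ↥W₁, (A : H →L[ℂ] H).IsPositive → ∀ k : K,
      IsScalarMeasureOf (μ A k) (fun Δ => ((m Δ A : K →L[ℂ] K))) k)
    (n M : ℕ) (f : Fin n → X → ℝ) (g : Fin M → X → ℝ)
    (B : Fin n → ↥W₁) (C : Fin M → ↥W₁)
    (hf0 : ∀ i x, 0 ≤ f i x) (hg0 : ∀ j x, 0 ≤ g j x)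
    (hfmeas : ∀ i, Measurable (f i)) (hgmeas : ∀ j, Measurable (g j))
    (hBpos : ∀ i, ((B i : H →L[ℂ] H)).IsPositive)
    (hCpos : ∀ j, ((C j : H →L[ℂ] H)).IsPositive)
    (hfint : ∀ i, ∃ c : ℝ, ∀ k : K,
      (∫⁻ x, ENNReal.ofReal (f i x) ∂(μ (B i) k)) ≤ ENNReal.ofReal (c * ‖k‖ ^ 2))
    (hpos : ∀ x : X,
      ((∑ i, f i x • ((B i : H →L[ℂ] H))) - ∑ j, g j x • ((C j : H →L[ℂ] H))).IsPositive) :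
    ∀ k : K,
      (∑ j, (∫⁻ x, ENNReal.ofReal (g j x) ∂(μ (C j) k)).toReal) ≤
      (∑ i, (∫⁻ x, ENNReal.ofReal (f i x) ∂(μ (B i) k)).toReal) := by
  intro k
  have hBfin := fun i => (hμ (B i) (hBpos i) k).isFiniteMeasure
  have hCfin := fun j => (hμ (C j) (hCpos j) k).isFiniteMeasure
  have hle : ∑ j, ∫⁻ x, ENNReal.ofReal (g j x) ∂(μ (C j) k) ≤
      ∑ i, ∫⁻ x, ENNReal.ofReal (f i x) ∂(μ (B i) k) :=
    sum_lintegral_le_of_forall_smul_le (fun i => (hfmeas i).real_toNNReal)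
      (fun j => (hgmeas j).real_toNNReal)
      fun x => hm.sum_smul_le_sum_smul hμ (hf0 · x) (hg0 · x) hBpos hCpos (hpos x) k
  refine ENNReal.sum_toReal_le_sum_toReal (fun i => ?_) hle
  obtain ⟨c, hc⟩ := hfint i
  exact ne_top_of_le_ne_top ENNReal.ofReal_ne_top (hc k)

/-- Let `m` be a non-negative measure, `fᵢ, gⱼ ≥ 0` measurable functions and
`Bᵢ, Cⱼ ∈ W₁` positive operators, with each `fᵢ` integrable w.r.t. `m_{Bᵢ}` and each `gⱼ`
integrable w.r.t. `m_{Cⱼ}`.  If `Σᵢ fᵢ(x)Bᵢ − Σⱼ gⱼ(x)Cⱼ` is positive for every `x`, then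
`Σᵢ ∫ fᵢ dμ_{Bᵢ,k} ≥ Σⱼ ∫ gⱼ dμ_{Cⱼ,k}` for every `k ∈ K`. -/
theorem statement10 {X : Type} [MeasurableSpace X] {H K : Type}
    [NormedAddCommGroup H] [InnerProductSpace ℂ H] [CompleteSpace H]
    [NormedAddCommGroup K] [InnerProductSpace ℂ K] [CompleteSpace K]
    {W₁ : VonNeumannAlgebra H} {W₂ : VonNeumannAlgebra K}
    (m : Set X → (↥W₁ →L[ℂ] ↥W₂)) (hm : IsNonnegMeasure m)
    (μ : ↥W₁ → K → Measure X)
    (hμ : ∀ A : ↥W₁, (A : H →L[ℂ] H).IsPositive → ∀ k : K,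
      IsScalarMeasureOf (μ A k) (fun Δ => ((m Δ A : K →L[ℂ] K))) k)
    (n M : ℕ) (f : Fin n → X → ℝ) (g : Fin M → X → ℝ)
    (B : Fin n → ↥W₁) (C : Fin M → ↥W₁)
    (hf0 : ∀ i x, 0 ≤ f i x) (hg0 : ∀ j x, 0 ≤ g j x)
    (hfmeas : ∀ i, Measurable (f i)) (hgmeas : ∀ j, Measurable (g j))
    (hBpos : ∀ i, ((B i : H →L[ℂ] H)).IsPositive)
    (hCpos : ∀ j, ((C j : H →L[ℂ] H)).IsPositive)
    (hfint : ∀ i, ∃ c : ℝ, ∀ k : K,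
      (∫⁻ x, ENNReal.ofReal (f i x) ∂(μ (B i) k)) ≤ ENNReal.ofReal (c * ‖k‖ ^ 2))
    (hgint : ∀ j, ∃ c : ℝ, ∀ k : K,
      (∫⁻ x, ENNReal.ofReal (g j x) ∂(μ (C j) k)) ≤ ENNReal.ofReal (c * ‖k‖ ^ 2))
    (hpos : ∀ x : X,
      ((∑ i, f i x • ((B i : H →L[ℂ] H))) - ∑ j, g j x • ((C j : H →L[ℂ] H))).IsPositive) :
    ∀ k : K,
      (∑ j, (∫⁻ x, ENNReal.ofReal (g j x) ∂(μ (C j) k)).toReal) ≤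
      (∑ i, (∫⁻ x, ENNReal.ofReal (f i x) ∂(μ (B i) k)).toReal) :=
  statement10_general m hm μ hμ n M f g B C hf0 hg0 hfmeas hgmeas hBpos hCpos hfint hpos
end
end

section
/- Let (X,S) be a measurable space, H and K complex Hilbert spaces, W₁ ⊆ B(H) and W₂ ⊆ B(K) von Neumann algebras, and m : S → B(W₁,W₂) a non-negative measure. Then for every finite collection of pairwise disjoint sets Δ₁,…,Δ_n ∈ S with X = ∪ⱼ₌₁ⁿ Δⱼ and every choice of operators A₁,…,A_n ∈ W₁ with ‖Aⱼ‖ ≤ 1 for all j, one has ‖Σⱼ₌₁ⁿ m(Δⱼ)(Aⱼ)‖ ≤ 4‖m(X)(1_{W₁})‖, where 1_{W₁} is the identity operator on H; in particular m has finite semivariation. -/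
open MeasureTheory Filter Topology ZeroAtInfty ENNReal

noncomputable section

/-!
Split each `Aⱼ` into its real and imaginary parts, both self-adjoint of norm at most `1`. A
self-adjoint `a` with `‖a‖ ≤ 1` is the difference of `(1 + a)/2` and `(1 - a)/2`, which lie between
`0` and `1`. For such `Pⱼ`, positivity and finite additivity give
`0 ≤ Σⱼ m(Δⱼ)(Pⱼ) ≤ Σⱼ m(Δⱼ)(1) = m(X)(1)`, so the norm of the sum is at most `‖m(X)(1)‖`.
The four pieces give the factor `4`.
-/

namespace CountablyAdditiveSOT

variable {X K : Type*} [MeasurableSpace X] [NormedAddCommGroup K] [InnerProductSpace ℂ K]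
  {F : Set X → (K →L[ℂ] K)}

lemma apply_empty (hF : CountablyAdditiveSOT F) : F ∅ = 0 := by
  ext k
  have h := hF (fun _ => ∅) (fun _ => .empty) (fun _ _ _ => disjoint_bot_left) k
  rw [Set.iUnion_empty] at h
  exact tendsto_nhds_unique tendsto_const_nhds h.summable.tendsto_cofinite_zero

lemma hasSum {ι : Type*} [Countable ι] (hF : CountablyAdditiveSOT F) {Δ : ι → Set X}
    (hmeas : ∀ i, MeasurableSet (Δ i)) (hdisj : Pairwise (Function.onFun Disjoint Δ)) (k : K) :
    HasSum (fun i => F (Δ i) k) (F (⋃ i, Δ i) k) := by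
  -- Pad `Δ` with empty sets along an injection `ι → ℕ`; since `F ∅ = 0` the series is unchanged.
  obtain ⟨g, hg⟩ := Countable.exists_injective_nat ι
  set Δ' : ℕ → Set X := Function.extend g Δ ⊥
  have hΔ'_on : ∀ i, Δ' (g i) = Δ i := hg.extend_apply Δ ⊥
  have hΔ'_off : ∀ n, (¬∃ i, g i = n) → Δ' n = ∅ := fun n hn => Function.extend_apply' _ _ _ hn
  have hmeas' : ∀ n, MeasurableSet (Δ' n) := by
    intro n
    by_cases hn : ∃ i, g i = n
    · obtain ⟨i, rfl⟩ := hn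
      exact hΔ'_on i ▸ hmeas i
    · rw [hΔ'_off n hn]
      exact .empty
  have hdisj' : Pairwise (Function.onFun Disjoint Δ') := by
    intro a b hab
    by_cases ha : ∃ i, g i = a
    · by_cases hb : ∃ i, g i = b
      · obtain ⟨i, rfl⟩ := ha
        obtain ⟨j, rfl⟩ := hb
        simp only [Function.onFun, hΔ'_on]
        exact hdisj fun hij => hab (congrArg g hij)
      · simp only [Function.onFun, hΔ'_off b hb, Set.disjoint_empty]
    · simp only [Function.onFun, hΔ'_off a ha, Set.empty_disjoint]
  have hunion : ⋃ n, Δ' n = ⋃ i, Δ i := iSup_extend_bot hg Δ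
  have hvalues : (fun n => F (Δ' n) k) = Function.extend g (fun i => F (Δ i) k) 0 := by
    funext n
    simp only [Δ', Function.apply_extend (fun s => F s k), Function.comp_def, Pi.bot_apply,
      Set.bot_eq_empty, apply_empty hF, zero_apply]
    rfl
  have h := hF Δ' hmeas' hdisj' k
  rwa [hunion, hvalues, hasSum_extend_zero hg] at h

lemma sum_eq {ι : Type*} [Fintype ι] (hF : CountablyAdditiveSOT F) {Δ : ι → Set X}
    (hmeas : ∀ i, MeasurableSet (Δ i)) (hdisj : Pairwise (Function.onFun Disjoint Δ)) :
    ∑ i, F (Δ i) = F (⋃ i, Δ i) := by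
  ext k
  rw [sum_apply]
  exact (hasSum_fintype _).unique (hF.hasSum hmeas hdisj k)

end CountablyAdditiveSOT

section CStarAlgebra

variable {A : Type*} [CStarAlgebra A] [PartialOrder A] [StarOrderedRing A] {a : A}

lemma IsSelfAdjoint.le_one_of_norm_le_one (ha : IsSelfAdjoint a) (h : ‖a‖ ≤ 1) : a ≤ 1 :=
  ha.le_algebraMap_norm_self.trans (by simpa using algebraMap_mono (β := A) h)

lemma IsSelfAdjoint.half_one_add_mem_Icc (ha : IsSelfAdjoint a) (h : ‖a‖ ≤ 1) :
    (2⁻¹ : ℂ) • (1 + a) ∈ Set.Icc 0 1 := by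
  have h_neg_one_le : -1 ≤ a := neg_le.1 (ha.neg.le_one_of_norm_le_one (by rwa [norm_neg]))
  rw [show (2⁻¹ : ℂ) = ((2⁻¹ : ℝ) : ℂ) by norm_num, Complex.coe_smul]
  constructor
  · exact smul_nonneg (by norm_num) (by simpa [neg_le_iff_add_nonneg'] using h_neg_one_le)
  · calc (2⁻¹ : ℝ) • (1 + a) ≤ (2⁻¹ : ℝ) • (1 + 1) := by
          gcongr; exact ha.le_one_of_norm_le_one h
      _ = 1 := by module

end CStarAlgebra

namespace IsNonnegMeasure

variable {X H K : Type*} [MeasurableSpace X]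
  [NormedAddCommGroup H] [InnerProductSpace ℂ H] [CompleteSpace H]
  [NormedAddCommGroup K] [InnerProductSpace ℂ K] [CompleteSpace K]
  {W₁ : VonNeumannAlgebra H} {W₂ : VonNeumannAlgebra K} {m : Set X → (↥W₁ →L[ℂ] ↥W₂)}
  {ι : Type*} [Fintype ι] {Δ : ι → Set X}

lemma apply_nonneg (hm : IsNonnegMeasure m) {s : Set X} (hs : MeasurableSet s) {A : W₁}
    (hA : 0 ≤ (A : H →L[ℂ] H)) : 0 ≤ (m s A : K →L[ℂ] K) := by
  rw [ContinuousLinearMap.nonneg_iff_isPositive] at hA ⊢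
  exact (hm A hA).1 s hs

lemma apply_mono (hm : IsNonnegMeasure m) {s : Set X} (hs : MeasurableSet s) {A B : W₁}
    (hAB : (A : H →L[ℂ] H) ≤ B) : (m s A : K →L[ℂ] K) ≤ m s B := by
  have h := hm.apply_nonneg hs (A := B - A) (sub_nonneg.2 hAB)
  rwa [map_sub, AddSubgroupClass.coe_sub, sub_nonneg] at h

lemma sum_apply_one (hm : IsNonnegMeasure m) (hmeas : ∀ i, MeasurableSet (Δ i))
    (hdisj : Pairwise (Function.onFun Disjoint Δ)) (hcover : ⋃ i, Δ i = Set.univ) :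
    ∑ i, (m (Δ i) 1 : K →L[ℂ] K) = m Set.univ 1 :=
  hcover ▸ (hm 1 ContinuousLinearMap.isPositive_one).2.sum_eq hmeas hdisj

lemma norm_sum_apply_le_of_mem_Icc (hm : IsNonnegMeasure m) (hmeas : ∀ i, MeasurableSet (Δ i))
    (hdisj : Pairwise (Function.onFun Disjoint Δ)) (hcover : ⋃ i, Δ i = Set.univ) (P : ι → W₁)
    (hP : ∀ i, (P i : H →L[ℂ] H) ∈ Set.Icc 0 1) :
    ‖∑ i, (m (Δ i) (P i) : K →L[ℂ] K)‖ ≤ ‖(m Set.univ 1 : K →L[ℂ] K)‖ := by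
  refine CStarAlgebra.norm_le_norm_of_nonneg_of_le
    (Finset.sum_nonneg fun i _ => hm.apply_nonneg (hmeas i) (hP i).1) ?_
  rw [← hm.sum_apply_one hmeas hdisj hcover]
  exact Finset.sum_le_sum fun i _ => hm.apply_mono (hmeas i) (hP i).2

lemma norm_sum_apply_le_of_isSelfAdjoint (hm : IsNonnegMeasure m)
    (hmeas : ∀ i, MeasurableSet (Δ i)) (hdisj : Pairwise (Function.onFun Disjoint Δ))
    (hcover : ⋃ i, Δ i = Set.univ) (a : ι → W₁) (ha : ∀ i, IsSelfAdjoint (a i : H →L[ℂ] H))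
    (ha_norm : ∀ i, ‖(a i : H →L[ℂ] H)‖ ≤ 1) :
    ‖∑ i, (m (Δ i) (a i) : K →L[ℂ] K)‖ ≤ 2 * ‖(m Set.univ 1 : K →L[ℂ] K)‖ := by
  set P : ι → W₁ := fun i => (2⁻¹ : ℂ) • (1 + a i)
  set Q : ι → W₁ := fun i => (2⁻¹ : ℂ) • (1 + -a i)
  have hPQ : ∀ i, (m (Δ i) (a i) : K →L[ℂ] K) = m (Δ i) (P i) - m (Δ i) (Q i) := fun i => by
    rw [← AddSubgroupClass.coe_sub, ← map_sub]
    congr 2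
    module
  have hP := hm.norm_sum_apply_le_of_mem_Icc hmeas hdisj hcover P
    fun i => (ha i).half_one_add_mem_Icc (ha_norm i)
  have hQ := hm.norm_sum_apply_le_of_mem_Icc hmeas hdisj hcover Q
    fun i => (ha i).neg.half_one_add_mem_Icc (by rw [norm_neg]; exact ha_norm i)
  simp only [hPQ, Finset.sum_sub_distrib]
  linarith [norm_sub_le (∑ i, (m (Δ i) (P i) : K →L[ℂ] K)) (∑ i, (m (Δ i) (Q i) : K →L[ℂ] K))]

lemma norm_sum_apply_le (hm : IsNonnegMeasure m) (hmeas : ∀ i, MeasurableSet (Δ i))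
    (hdisj : Pairwise (Function.onFun Disjoint Δ)) (hcover : ⋃ i, Δ i = Set.univ) (A : ι → W₁)
    (hA : ∀ i, ‖(A i : H →L[ℂ] H)‖ ≤ 1) :
    ‖∑ i, (m (Δ i) (A i) : K →L[ℂ] K)‖ ≤ 4 * ‖(m Set.univ 1 : K →L[ℂ] K)‖ := by
  have hcoe_re : ∀ i, ((realPart (A i) : W₁) : H →L[ℂ] H) = realPart (A i : H →L[ℂ] H) := by
    simp [realPart_apply_coe]
  have hcoe_im : ∀ i,
      ((imaginaryPart (A i) : W₁) : H →L[ℂ] H) = imaginaryPart (A i : H →L[ℂ] H) := by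
    simp [imaginaryPart_apply_coe]
  have hre := hm.norm_sum_apply_le_of_isSelfAdjoint hmeas hdisj hcover (fun i => realPart (A i))
    (fun i => hcoe_re i ▸ (realPart _).2) (fun i => hcoe_re i ▸ (realPart.norm_le _).trans (hA i))
  have him := hm.norm_sum_apply_le_of_isSelfAdjoint hmeas hdisj hcover
    (fun i => imaginaryPart (A i)) (fun i => hcoe_im i ▸ (imaginaryPart _).2)
    (fun i => hcoe_im i ▸ (imaginaryPart.norm_le _).trans (hA i))
  have hsplit : ∀ i, (m (Δ i) (A i) : K →L[ℂ] K) =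
      m (Δ i) (realPart (A i)) + Complex.I • (m (Δ i) (imaginaryPart (A i)) : K →L[ℂ] K) := by
    intro i
    conv_lhs => rw [← realPart_add_I_smul_imaginaryPart (A i)]
    rw [map_add, map_smul]
    rfl
  simp only [hsplit, Finset.sum_add_distrib, ← Finset.smul_sum]
  refine (norm_add_le _ _).trans ?_
  rw [norm_smul, Complex.norm_I, one_mul]
  linarith

end IsNonnegMeasure

/-- A non-negative measure `m` satisfies
`‖Σⱼ m(Δⱼ)(Aⱼ)‖ ≤ 4 ‖m(X)(1)‖` for every finite measurable partition `Δ₁, …, Δ_n` of `X` and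
operators `Aⱼ ∈ W₁` of norm at most `1`; in particular `m` has finite semivariation. -/
theorem statement11 {X : Type} [MeasurableSpace X] {H K : Type}
    [NormedAddCommGroup H] [InnerProductSpace ℂ H] [CompleteSpace H]
    [NormedAddCommGroup K] [InnerProductSpace ℂ K] [CompleteSpace K]
    {W₁ : VonNeumannAlgebra H} {W₂ : VonNeumannAlgebra K}
    (m : Set X → (↥W₁ →L[ℂ] ↥W₂)) (hm : IsNonnegMeasure m) :
    (∀ (n : ℕ) (Δ : Fin n → Set X), (∀ j, MeasurableSet (Δ j)) →
      Pairwise (Function.onFun Disjoint Δ) → (⋃ j, Δ j) = Set.univ →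
      ∀ A : Fin n → ↥W₁, (∀ j, ‖(A j : H →L[ℂ] H)‖ ≤ 1) →
        ‖∑ j, ((m (Δ j) (A j) : K →L[ℂ] K))‖ ≤
          4 * ‖((m Set.univ (1 : ↥W₁) : K →L[ℂ] K))‖) ∧
    ∃ c : ℝ, ∀ (n : ℕ) (Δ : Fin n → Set X), (∀ j, MeasurableSet (Δ j)) →
      Pairwise (Function.onFun Disjoint Δ) → (⋃ j, Δ j) = Set.univ →
      ∀ A : Fin n → ↥W₁, (∀ j, ‖(A j : H →L[ℂ] H)‖ ≤ 1) →
        ‖∑ j, ((m (Δ j) (A j) : K →L[ℂ] K))‖ ≤ c := by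
  have bound := fun (n : ℕ) (Δ : Fin n → Set X) hmeas hdisj hcover A hA =>
    hm.norm_sum_apply_le (Δ := Δ) hmeas hdisj hcover A hA
  exact ⟨bound, _, bound⟩
end
end

section
/- Let X be a compact Hausdorff space with its Borel σ-algebra, H and K complex Hilbert spaces, W₁ ⊆ B(H) and W₂ ⊆ B(K) von Neumann algebras, and ρ : C(X,W₁) → W₂ a unital ⋆-algebra homomorphism. Suppose that for every hermitian projection P ∈ W₁ there is given a spectral measure F_P : Borel(X) → W₂ such that each finite Borel measure ν_{P,k}(Δ) := ⟪F_P(Δ)k, k⟫ (k ∈ K) is regular and ⟪ρ(f•P)k, k⟫ = ∫_X f dν_{P,k} for all f ∈ C(X,ℝ) with f ≥ 0 and all k ∈ K. Then whenever Σᵢ₌₁ⁿ λᵢPᵢ = Σⱼ₌₁ᵐ μⱼQⱼ with λᵢ,μⱼ ∈ ℝ and Pᵢ,Qⱼ hermitian projections in W₁, one has Σᵢ₌₁ⁿ λᵢF_{Pᵢ}(Δ) = Σⱼ₌₁ᵐ μⱼF_{Qⱼ}(Δ) for every Borel set Δ ⊆ X. -/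
/-!
Fix `k ∈ K`. Applying `A ↦ ⟪ρ(A)k, k⟫` to `Σ λᵢ (f • Pᵢ) = Σ μⱼ (f • Qⱼ)` shows that the signed
combination `Σ λᵢ ν_{Pᵢ,k} - Σ μⱼ ν_{Qⱼ,k}` integrates every nonnegative compactly supported
continuous function to zero. Splitting the coefficients by sign gives two regular measures with the
same integrals, which coincide by the uniqueness part of the Riesz–Markov–Kakutani theorem; so the
combination vanishes on every Borel set `Δ`. As `ν_{P,k}(Δ) = ‖F_P(Δ)k‖² = ⟪F_P(Δ)k, k⟫`, the
operator `Σ λᵢ F_{Pᵢ}(Δ) - Σ μⱼ F_{Qⱼ}(Δ)` has vanishing quadratic form, hence is zero.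
-/

open MeasureTheory Filter Topology ZeroAtInfty ENNReal

noncomputable section

/-- For `f ∈ C(X, ℝ)` and `P ∈ W`, the element `f • P : x ↦ f(x) P` of `C(X, W)`. -/
def cmSmul {X : Type*} [TopologicalSpace X] {H : Type*} [NormedAddCommGroup H]
    [InnerProductSpace ℂ H] [CompleteSpace H] {W : VonNeumannAlgebra H}
    (f : C(X, ℝ)) (P : ↥W) : C(X, ↥W) :=
  ⟨fun x => (f x : ℂ) • P, by fun_prop⟩

open scoped NNReal CompactlySupported InnerProductSpace

theorem Real.sum_mul_eq_sum_toNNReal_mul_sub {ι : Type*} (s : Finset ι) (c x : ι → ℝ) :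
    ∑ i ∈ s, c i * x i =
      ∑ i ∈ s, ((c i).toNNReal : ℝ) * x i - ∑ i ∈ s, ((-c i).toNNReal : ℝ) * x i := by
  rw [← Finset.sum_sub_distrib]
  refine Finset.sum_congr rfl fun i _ => ?_
  rw [← sub_mul, Real.coe_toNNReal', Real.coe_toNNReal', max_zero_sub_max_neg_zero_eq_self]

namespace MeasureTheory.Measure

variable {X ι : Type*} [MeasurableSpace X] [Fintype ι]
  {ν : ι → Measure X} [∀ i, IsFiniteMeasure (ν i)]

theorem measureReal_finsetSum_nnreal_smul (a : ι → ℝ≥0) (s : Set X) :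
    (∑ i, a i • ν i).real s = ∑ i, (a i : ℝ) * (ν i).real s := by
  rw [measureReal_def, coe_finsetSum, Finset.sum_apply,
    ENNReal.toReal_sum fun i _ => by finiteness]
  simp [measureReal_def]

theorem integral_finsetSum_nnreal_smul [TopologicalSpace X] [OpensMeasurableSpace X]
    (a : ι → ℝ≥0) (f : C_c(X, ℝ≥0)) :
    ∫ x, (f x : ℝ) ∂(∑ i, a i • ν i) = ∑ i, (a i : ℝ) * ∫ x, (f x : ℝ) ∂ν i := by
  have hf : Continuous fun x => (f x : ℝ) := by fun_prop
  rw [integral_finsetSum_measure fun i _ =>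
    hf.integrable_of_hasCompactSupport (f.hasCompactSupport.comp_left NNReal.coe_zero)]
  simp only [integral_smul_nnreal_measure, NNReal.smul_def, smul_eq_mul]

theorem sum_mul_measureReal_eq_zero_of_sum_mul_integral_eq_zero [TopologicalSpace X]
    [T2Space X] [LocallyCompactSpace X] [BorelSpace X] [∀ i, (ν i).Regular] (c : ι → ℝ)
    (h : ∀ f : C_c(X, ℝ≥0), ∑ i, c i * ∫ x, (f x : ℝ) ∂ν i = 0) (s : Set X) :
    ∑ i, c i * (ν i).real s = 0 := by
  have hμ : ∑ i, (c i).toNNReal • ν i = ∑ i, (-c i).toNNReal • ν i := by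
    refine ext_of_integral_eq_on_compactlySupported_nnreal fun f => ?_
    rw [integral_finsetSum_nnreal_smul, integral_finsetSum_nnreal_smul, ← sub_eq_zero,
      ← Real.sum_mul_eq_sum_toNNReal_mul_sub, h]
  rw [Real.sum_mul_eq_sum_toNNReal_mul_sub, ← measureReal_finsetSum_nnreal_smul,
    ← measureReal_finsetSum_nnreal_smul, hμ, sub_self]

end MeasureTheory.Measure

theorem IsStarProjection.inner_apply_self {𝕜 E : Type*} [RCLike 𝕜] [NormedAddCommGroup E]
    [InnerProductSpace 𝕜 E] [CompleteSpace E] {p : E →L[𝕜] E} (hp : IsStarProjection p)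
    (x : E) : ⟪p x, x⟫_𝕜 = ((‖p x‖ ^ 2 : ℝ) : 𝕜) := by
  have hpp : p (p x) = p x := DFunLike.congr_fun hp.isIdempotentElem.eq x
  calc ⟪p x, x⟫_𝕜 = ⟪p (p x), x⟫_𝕜 := by rw [hpp]
    _ = ⟪p x, p x⟫_𝕜 := hp.isSelfAdjoint.isSymmetric _ _
    _ = ((‖p x‖ ^ 2 : ℝ) : 𝕜) := by rw [inner_self_eq_norm_sq_to_K]; norm_cast

section SpectralMeasure

variable {X : Type*} [MeasurableSpace X] {K : Type*} [NormedAddCommGroup K]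
  [InnerProductSpace ℂ K] [CompleteSpace K] {G : Set X → (K →L[ℂ] K)}

theorem IsSpectralMeasure.isStarProjection (hG : IsSpectralMeasure G) {Δ : Set X}
    (hΔ : MeasurableSet Δ) : IsStarProjection (G Δ) :=
  ⟨(hG.1 Δ hΔ).2, (hG.1 Δ hΔ).1⟩

theorem IsSpectralMeasure.re_inner_apply_self (hG : IsSpectralMeasure G) {Δ : Set X}
    (hΔ : MeasurableSet Δ) (k : K) : (⟪G Δ k, k⟫_ℂ).re = ‖G Δ k‖ ^ 2 := by
  rw [(hG.isStarProjection hΔ).inner_apply_self]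
  exact RCLike.ofReal_re (K := ℂ) _

theorem IsSpectralMeasure.apply_empty (hG : IsSpectralMeasure G) (k : K) : G ∅ k = 0 := by
  have h := hG.2 (fun _ => ∅) (fun _ => .empty) (fun _ _ _ => Set.disjoint_empty _) k
  rw [Set.iUnion_empty] at h
  exact tendsto_nhds_unique tendsto_const_nhds h.summable.tendsto_atTop_zero

theorem IsSpectralMeasure.exists_isScalarMeasureOf (hG : IsSpectralMeasure G) (k : K) :
    ∃ ν : Measure X, IsScalarMeasureOf ν G k ∧ IsFiniteMeasure ν := by
  let ν : Measure X := Measure.ofMeasurable (fun Δ _ => ENNReal.ofReal (⟪G Δ k, k⟫_ℂ).re)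
    (by simp [hG.apply_empty]) fun Δ hΔ hdisj => by
      have hswap (x : K) : (innerSL ℂ k x).re = (⟪x, k⟫_ℂ).re := by
        rw [innerSL_apply_apply, ← inner_conj_symm, Complex.conj_re]
      have hsum : HasSum (fun j => (⟪G (Δ j) k, k⟫_ℂ).re) (⟪G (⋃ j, Δ j) k, k⟫_ℂ).re := by
        simpa only [← hswap, Complex.reCLM_apply] using
          ((hG.2 Δ hΔ hdisj k).mapL (innerSL ℂ k)).mapL Complex.reCLM
      rw [← hsum.tsum_eq, ENNReal.ofReal_tsum_of_nonneg
        (fun j => by rw [hG.re_inner_apply_self (hΔ j)]; positivity) hsum.summable]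
  have hν : IsScalarMeasureOf ν G k := fun Δ hΔ => Measure.ofMeasurable_apply Δ hΔ
  exact ⟨ν, hν, ⟨by rw [hν _ .univ]; exact ENNReal.ofReal_lt_top⟩⟩

theorem IsScalarMeasureOf.measureReal_eq {ν : Measure X} {k : K} (hν : IsScalarMeasureOf ν G k)
    (hG : IsSpectralMeasure G) {Δ : Set X} (hΔ : MeasurableSet Δ) :
    ν.real Δ = ‖G Δ k‖ ^ 2 := by
  rw [measureReal_def, hν Δ hΔ, hG.re_inner_apply_self hΔ,
    ENNReal.toReal_ofReal (by positivity)]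

end SpectralMeasure

section CmSmul

variable {X : Type*} [TopologicalSpace X] {H K : Type*}
  [NormedAddCommGroup H] [InnerProductSpace ℂ H] [CompleteSpace H]
  [NormedAddCommGroup K] [InnerProductSpace ℂ K] [CompleteSpace K]
  {W₁ : VonNeumannAlgebra H} {W₂ : VonNeumannAlgebra K} {ι : Type*} [Fintype ι]

theorem sum_smul_cmSmul (f : C(X, ℝ)) (c : ι → ℂ) (R : ι → ↥W₁) :
    ∑ i, c i • cmSmul f (R i) = cmSmul f (∑ i, c i • R i) := by
  ext x : 1
  simp only [cmSmul, ContinuousMap.coe_sum, ContinuousMap.coe_smul, ContinuousMap.coe_mk,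
    Finset.sum_apply, Pi.smul_apply, Finset.smul_sum]
  exact Finset.sum_congr rfl fun i _ => smul_comm _ _ _

theorem cmSmul_zero (f : C(X, ℝ)) : cmSmul f (0 : ↥W₁) = 0 := by
  ext x : 1
  simp [cmSmul]

theorem sum_mul_inner_map_cmSmul_eq_zero (ρ : C(X, ↥W₁) →ₗ[ℂ] ↥W₂) (f : C(X, ℝ)) (c : ι → ℝ)
    (R : ι → ↥W₁) (hc : ∑ i, c i • (R i : H →L[ℂ] H) = 0) (k : K) :
    ∑ i, (c i : ℂ) * ⟪(ρ (cmSmul f (R i)) : K →L[ℂ] K) k, k⟫_ℂ = 0 := by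
  have hcW : ∑ i, (c i : ℂ) • R i = 0 := by
    apply Subtype.coe_injective
    simpa [Complex.coe_smul] using hc
  have h := congrArg (fun g => ⟪(ρ g : K →L[ℂ] K) k, k⟫_ℂ) (sum_smul_cmSmul f (c ·) R)
  rw [hcW, cmSmul_zero] at h
  simpa [sum_inner, inner_smul_left] using h

end CmSmul

section Representation

variable {X : Type*} [TopologicalSpace X] [MeasurableSpace X] [T2Space X] [LocallyCompactSpace X]
  [BorelSpace X] {H K : Type*}
  [NormedAddCommGroup H] [InnerProductSpace ℂ H] [CompleteSpace H]
  [NormedAddCommGroup K] [InnerProductSpace ℂ K] [CompleteSpace K]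
  {W₁ : VonNeumannAlgebra H} {W₂ : VonNeumannAlgebra K} {ι : Type*} [Fintype ι]

theorem sum_smul_spectralMeasure_eq_zero (ρ : C(X, ↥W₁) →ₗ[ℂ] ↥W₂) (F : ↥W₁ → Set X → ↥W₂)
    (R : ι → ↥W₁) (hspec : ∀ i, IsSpectralMeasure (fun Δ => (F (R i) Δ : K →L[ℂ] K)))
    (hreg : ∀ i k (ν : Measure X), IsScalarMeasureOf ν (fun Δ => (F (R i) Δ : K →L[ℂ] K)) k →
      ν.Regular)
    (hrep : ∀ i (f : C(X, ℝ)), (∀ x, 0 ≤ f x) → ∀ k (ν : Measure X),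
      IsScalarMeasureOf ν (fun Δ => (F (R i) Δ : K →L[ℂ] K)) k →
        ⟪(ρ (cmSmul f (R i)) : K →L[ℂ] K) k, k⟫_ℂ = ((∫ x, f x ∂ν : ℝ) : ℂ))
    (c : ι → ℝ) (hc : ∑ i, c i • (R i : H →L[ℂ] H) = 0) {Δ : Set X} (hΔ : MeasurableSet Δ) :
    ∑ i, c i • (F (R i) Δ : K →L[ℂ] K) = 0 := by
  suffices h : ∀ k, ⟪(∑ i, c i • (F (R i) Δ : K →L[ℂ] K)) k, k⟫_ℂ = 0 from
    ContinuousLinearMap.coe_injective ((inner_map_self_eq_zero _).1 h)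
  intro k
  choose ν hν hfin using fun i => (hspec i).exists_isScalarMeasureOf k
  have := fun i => hreg i k (ν i) (hν i)
  have hint (f : C_c(X, ℝ≥0)) : ∑ i, c i * ∫ x, (f x : ℝ) ∂ν i = 0 := by
    let g : C(X, ℝ) := ⟨fun x => f x, by fun_prop⟩
    have hg : ∀ i, ⟪(ρ (cmSmul g (R i)) : K →L[ℂ] K) k, k⟫_ℂ = ((∫ x, g x ∂ν i : ℝ) : ℂ) :=
      fun i => hrep i g (fun x => (f x).2) k (ν i) (hν i)
    have h := sum_mul_inner_map_cmSmul_eq_zero ρ g c R hc k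
    simp only [hg] at h
    exact_mod_cast h
  have hsq : ∑ i, c i * ‖(F (R i) Δ : K →L[ℂ] K) k‖ ^ 2 = 0 := by
    simpa only [(hν _).measureReal_eq (hspec _) hΔ] using
      Measure.sum_mul_measureReal_eq_zero_of_sum_mul_integral_eq_zero c hint Δ
  simp only [FunLike.coe_sum, Finset.sum_apply, FunLike.coe_smul, Pi.smul_apply, sum_inner]
  simp only [← Complex.coe_smul, inner_smul_left, Complex.conj_ofReal,
    ((hspec _).isStarProjection hΔ).inner_apply_self, RCLike.ofReal_eq_complex_ofReal]
  exact_mod_cast hsq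

end Representation

/-- Let `ρ : C(X, W₁) → W₂` be a unital ⋆-representation (`X` compact
Hausdorff) and for every hermitian projection `P ∈ W₁` let `F_P` be a spectral measure with
regular scalar measures `ν_{P,k}` representing `ρ` on elements `f • P`.  Then the family
`{F_P}` respects real linear combinations of hermitian projections. -/
theorem statement13 {X : Type} [TopologicalSpace X] [CompactSpace X] [T2Space X]
    [MeasurableSpace X] [BorelSpace X] {H K : Type}
    [NormedAddCommGroup H] [InnerProductSpace ℂ H] [CompleteSpace H]
    [NormedAddCommGroup K] [InnerProductSpace ℂ K] [CompleteSpace K]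
    {W₁ : VonNeumannAlgebra H} {W₂ : VonNeumannAlgebra K}
    (ρ : C(X, ↥W₁) →⋆ₐ[ℂ] ↥W₂)
    (F : ↥W₁ → Set X → ↥W₂)
    (hFspec : ∀ P : ↥W₁, IsHermProj P →
      IsSpectralMeasure (fun Δ => ((F P Δ : K →L[ℂ] K))))
    (hFreg : ∀ P : ↥W₁, IsHermProj P → ∀ k : K, ∀ ν : Measure X,
      IsScalarMeasureOf ν (fun Δ => ((F P Δ : K →L[ℂ] K))) k → ν.Regular)
    (hFrep : ∀ P : ↥W₁, IsHermProj P → ∀ f : C(X, ℝ), (∀ x, 0 ≤ f x) → ∀ k : K,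
      ∀ ν : Measure X, IsScalarMeasureOf ν (fun Δ => ((F P Δ : K →L[ℂ] K))) k →
        (inner ℂ ((ρ (cmSmul f P) : K →L[ℂ] K) k) k : ℂ) = ((∫ x, f x ∂ν : ℝ) : ℂ)) :
    ∀ (n m : ℕ) (lam : Fin n → ℝ) (mu : Fin m → ℝ)
      (P : Fin n → ↥W₁) (Q : Fin m → ↥W₁),
      (∀ i, IsHermProj (P i)) → (∀ j, IsHermProj (Q j)) →
      (∑ i, lam i • ((P i : H →L[ℂ] H))) = (∑ j, mu j • ((Q j : H →L[ℂ] H))) →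
      ∀ Δ : Set X, MeasurableSet Δ →
        (∑ i, lam i • ((F (P i) Δ : K →L[ℂ] K))) =
        ∑ j, mu j • ((F (Q j) Δ : K →L[ℂ] K)) := by
  intro n m lam mu P Q hP hQ hsum Δ hΔ
  let R : Fin n ⊕ Fin m → ↥W₁ := Sum.elim P Q
  have hR : ∀ l, IsHermProj (R l) := Sum.forall.2 ⟨hP, hQ⟩
  have hRsum : ∑ l, Sum.elim lam (-mu) l • (R l : H →L[ℂ] H) = 0 := by
    simp [R, Fintype.sum_sum_type, hsum, neg_smul]
  have h := sum_smul_spectralMeasure_eq_zero ρ.toLinearMap F R (fun l => hFspec _ (hR l))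
    (fun l => hFreg _ (hR l)) (fun l => hFrep _ (hR l)) _ hRsum hΔ
  simpa [R, Fintype.sum_sum_type, neg_smul, ← sub_eq_add_neg, sub_eq_zero] using h
end
end

section
/- Let (X,S) be a measurable space, H and K complex Hilbert spaces, W₁ ⊆ B(H) and W₂ ⊆ B(K) von Neumann algebras, and M : S → B(W₁,W₂) a non-negative measure. Fix Δ ∈ S and suppose there is a constant k_Δ > 0 such that ‖M(Δ)(P)‖ ≤ k_Δ for every hermitian projection P ∈ W₁. Then ‖M(Δ)(A)‖ ≤ ‖A‖·k_Δ for every positive operator A ∈ W₁. -/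
open MeasureTheory Filter Topology ZeroAtInfty ENNReal

noncomputable section

/-! Since `0 ≤ A ≤ ‖A‖ • 1` and `M(Δ)` preserves positivity, `0 ≤ M(Δ)A ≤ ‖A‖ • M(Δ)1`; the norm is
monotone on positive elements of a C⋆-algebra, and `1` is a hermitian projection, so
`‖M(Δ)1‖ ≤ k_Δ`. -/

theorem IsHermProj.one {H : Type*} [NormedAddCommGroup H] [InnerProductSpace ℂ H]
    [CompleteSpace H] {W : VonNeumannAlgebra H} : IsHermProj (1 : ↥W) :=
  ⟨IsSelfAdjoint.one _, IsIdempotentElem.one⟩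

namespace VonNeumannAlgebra

variable {H K : Type*} [NormedAddCommGroup H] [InnerProductSpace ℂ H] [CompleteSpace H]
  [NormedAddCommGroup K] [InnerProductSpace ℂ K] [CompleteSpace K]
  {W₁ : VonNeumannAlgebra H} {W₂ : VonNeumannAlgebra K}

theorem isPositive_norm_smul_one_sub {A : ↥W₁} (hA : (A : H →L[ℂ] H).IsPositive) :
    (((‖(A : H →L[ℂ] H)‖ : ℂ) • 1 - A : ↥W₁) : H →L[ℂ] H).IsPositive := by
  rw [← ContinuousLinearMap.nonneg_iff_isPositive]
  have hle := hA.isSelfAdjoint.le_algebraMap_norm_self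
  simpa [Algebra.algebraMap_eq_smul_one, ← RCLike.real_smul_eq_coe_smul (K := ℂ)] using hle

theorem norm_apply_le_norm_mul_norm_apply_one (φ : ↥W₁ →ₗ[ℂ] ↥W₂)
    (hφ : ∀ A : ↥W₁, (A : H →L[ℂ] H).IsPositive → (φ A : K →L[ℂ] K).IsPositive)
    {A : ↥W₁} (hA : (A : H →L[ℂ] H).IsPositive) :
    ‖(φ A : K →L[ℂ] K)‖ ≤ ‖(A : H →L[ℂ] H)‖ * ‖(φ 1 : K →L[ℂ] K)‖ := by
  set n := ‖(A : H →L[ℂ] H)‖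
  have hφA : 0 ≤ (φ A : K →L[ℂ] K) := (ContinuousLinearMap.nonneg_iff_isPositive _).2 (hφ A hA)
  have hφA_le : (φ A : K →L[ℂ] K) ≤ (n : ℂ) • (φ 1 : K →L[ℂ] K) := by
    have := (ContinuousLinearMap.nonneg_iff_isPositive _).2
      (hφ _ (isPositive_norm_smul_one_sub hA))
    simpa [sub_nonneg] using this
  calc ‖(φ A : K →L[ℂ] K)‖ ≤ ‖(n : ℂ) • (φ 1 : K →L[ℂ] K)‖ :=
        CStarAlgebra.norm_le_norm_of_nonneg_of_le hφA hφA_le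
    _ = n * ‖(φ 1 : K →L[ℂ] K)‖ := by
        rw [norm_smul, Complex.norm_real, Real.norm_of_nonneg (norm_nonneg _)]

end VonNeumannAlgebra

theorem statement14_general {X : Type} [MeasurableSpace X] {H K : Type}
    [NormedAddCommGroup H] [InnerProductSpace ℂ H] [CompleteSpace H]
    [NormedAddCommGroup K] [InnerProductSpace ℂ K] [CompleteSpace K]
    {W₁ : VonNeumannAlgebra H} {W₂ : VonNeumannAlgebra K}
    (M : Set X → (↥W₁ →L[ℂ] ↥W₂)) (hM : IsNonnegMeasure M)
    (Δ : Set X) (hΔ : MeasurableSet Δ) (kΔ : ℝ)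
    (hbdd : ∀ P : ↥W₁, IsHermProj P → ‖(M Δ P : K →L[ℂ] K)‖ ≤ kΔ) :
    ∀ A : ↥W₁, (A : H →L[ℂ] H).IsPositive →
      ‖(M Δ A : K →L[ℂ] K)‖ ≤ ‖(A : H →L[ℂ] H)‖ * kΔ := by
  intro A hA
  calc ‖(M Δ A : K →L[ℂ] K)‖ ≤ ‖(A : H →L[ℂ] H)‖ * ‖(M Δ 1 : K →L[ℂ] K)‖ :=
        VonNeumannAlgebra.norm_apply_le_norm_mul_norm_apply_one (M Δ : ↥W₁ →ₗ[ℂ] ↥W₂)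
          (fun B hB => (hM B hB).1 Δ hΔ) hA
    _ ≤ ‖(A : H →L[ℂ] H)‖ * kΔ := by gcongr; exact hbdd 1 IsHermProj.one

/-- If `M` is a non-negative measure, `Δ` is measurable, and
`‖M(Δ)(P)‖ ≤ k_Δ` for every hermitian projection `P ∈ W₁`, then
`‖M(Δ)(A)‖ ≤ ‖A‖ · k_Δ` for every positive `A ∈ W₁`. -/
theorem statement14 {X : Type} [MeasurableSpace X] {H K : Type}
    [NormedAddCommGroup H] [InnerProductSpace ℂ H] [CompleteSpace H]
    [NormedAddCommGroup K] [InnerProductSpace ℂ K] [CompleteSpace K]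
    {W₁ : VonNeumannAlgebra H} {W₂ : VonNeumannAlgebra K}
    (M : Set X → (↥W₁ →L[ℂ] ↥W₂)) (hM : IsNonnegMeasure M)
    (Δ : Set X) (hΔ : MeasurableSet Δ) (kΔ : ℝ) (hkΔ : 0 < kΔ)
    (hbdd : ∀ P : ↥W₁, IsHermProj P → ‖(M Δ P : K →L[ℂ] K)‖ ≤ kΔ) :
    ∀ A : ↥W₁, (A : H →L[ℂ] H).IsPositive →
      ‖(M Δ A : K →L[ℂ] K)‖ ≤ ‖(A : H →L[ℂ] H)‖ * kΔ :=
  statement14_general M hM Δ hΔ kΔ hbdd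
end
end
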